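/- Let p be a prime and let G ⊆ GL₃(ℤ_p) be the Heisenberg pro-p group of 3×3 upper unitriangular matrices over ℤ_p, with the topology induced from the entrywise topology on matrices. Let x = I + E₁₂, y = I + E₂₃, z = I + E₁₃ (where E_{ij} denote matrix units), and let H be the closure of the subgroup of G generated by x and y^p. Then z^p ∈ Φ(H) and z ∉ H. Consequently, Φ(⟨z⟩) ⊆ Φ(H) although ⟨z⟩ ⊄ H (where ⟨z⟩ is the closure of the subgroup generated by z), so G is neither Frattini-resistant nor Frattini-injective. -/

import Mathlib

open Matrix

variable (p : ℕ) [Fact p.Prime]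

/-- `3 × 3` matrices over `ℤ_p`. -/
abbrev Mat3 (p : ℕ) [Fact p.Prime] := Matrix (Fin 3) (Fin 3) ℤ_[p]

/-- Elementary transvection `I + c · Eᵢⱼ` (for `i ≠ j`), as a unit of the matrix ring,
i.e. as an element of `GL₃(ℤ_p)`. -/
noncomputable def transvection3 (i j : Fin 3) (hij : i ≠ j) (c : ℤ_[p]) : (Mat3 p)ˣ where
  val := 1 + Matrix.single i j c
  inv := 1 - Matrix.single i j c
  val_inv := by
    have h : Matrix.single i j c * Matrix.single i j c = (0 : Mat3 p) :=
      by simp [hij.symm]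
    have : (1 + Matrix.single i j c) * (1 - Matrix.single i j c)
        = 1 - Matrix.single i j c * Matrix.single i j c := by noncomm_ring
    rw [this, h, sub_zero]
  inv_val := by
    have h : Matrix.single i j c * Matrix.single i j c = (0 : Mat3 p) :=
      by simp [hij.symm]
    have : (1 - Matrix.single i j c) * (1 + Matrix.single i j c)
        = 1 - Matrix.single i j c * Matrix.single i j c := by noncomm_ring
    rw [this, h, sub_zero]

/-- The Heisenberg pro-`p` group: the subgroup of `GL₃(ℤ_p)` of upper unitriangular
matrices. -/
def heisenberg : Subgroup (Mat3 p)ˣ where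
  carrier := {M | (M : Mat3 p) 0 0 = 1 ∧ (M : Mat3 p) 1 1 = 1 ∧ (M : Mat3 p) 2 2 = 1 ∧
    (M : Mat3 p) 1 0 = 0 ∧ (M : Mat3 p) 2 0 = 0 ∧ (M : Mat3 p) 2 1 = 0}
  one_mem' := by
    refine ⟨?_, ?_, ?_, ?_, ?_, ?_⟩ <;> simp [Matrix.one_apply]
  mul_mem' := by
    rintro a b ⟨a1, a2, a3, a4, a5, a6⟩ ⟨b1, b2, b3, b4, b5, b6⟩
    refine ⟨?_, ?_, ?_, ?_, ?_, ?_⟩ <;>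
      simp [Units.val_mul, Matrix.mul_apply, Fin.sum_univ_three, a1, a2, a3, a4, a5, a6,
        b1, b2, b3, b4, b5, b6]
  inv_mem' := by
    rintro a ⟨a1, a2, a3, a4, a5, a6⟩
    have hNM : (↑a⁻¹ : Mat3 p) * (a : Mat3 p) = 1 := by
      rw [← Units.val_mul, inv_mul_cancel, Units.val_one]
    set N : Mat3 p := (↑a⁻¹ : Mat3 p) with hN
    have e : ∀ i j : Fin 3, (N * (a : Mat3 p)) i j = (1 : Mat3 p) i j := by
      intro i j; rw [hNM]
    have e10 := e 1 0
    have e20 := e 2 0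
    have e21 := e 2 1
    have e00 := e 0 0
    have e11 := e 1 1
    have e22 := e 2 2
    simp [Matrix.mul_apply, Fin.sum_univ_three, a1, a2, a3, a4, a5, a6,
      Matrix.one_apply] at e10 e20 e21 e00 e11 e22
    have h10 : N 1 0 = 0 := e10
    have h20 : N 2 0 = 0 := e20
    have h21 : N 2 1 = 0 := by
      rw [h20] at e21; simpa using e21
    have h00 : N 0 0 = 1 := e00
    have h11 : N 1 1 = 1 := by
      rw [h10] at e11; simpa using e11
    have h22 : N 2 2 = 1 := by
      rw [h20, h21] at e22; simpa using e22
    exact ⟨h00, h11, h22, h10, h20, h21⟩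

/-- `x = I + E₁₂`. -/
noncomputable def xH : ↥(heisenberg p) :=
  ⟨transvection3 p 0 1 (by decide) 1, by
    refine ⟨?_, ?_, ?_, ?_, ?_, ?_⟩ <;>
      simp [transvection3, Matrix.one_apply, Matrix.single]⟩

/-- `y = I + E₂₃`. -/
noncomputable def yH : ↥(heisenberg p) :=
  ⟨transvection3 p 1 2 (by decide) 1, by
    refine ⟨?_, ?_, ?_, ?_, ?_, ?_⟩ <;>
      simp [transvection3, Matrix.one_apply, Matrix.single]⟩

/-- `z = I + E₁₃`. -/
noncomputable def zH : ↥(heisenberg p) :=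
  ⟨transvection3 p 0 2 (by decide) 1, by
    refine ⟨?_, ?_, ?_, ?_, ?_, ?_⟩ <;>
      simp [transvection3, Matrix.one_apply, Matrix.single]⟩

section FrattiniPrelude

open scoped commutatorElement

/-- A subgroup is topologically finitely generated (and closed) if it is the topological
closure of a subgroup generated by finitely many elements. -/
def IsTopFG {G : Type*} [Group G] [TopologicalSpace G] [IsTopologicalGroup G]
    (H : Subgroup G) : Prop :=
  ∃ S : Set G, S.Finite ∧ (Subgroup.closure S).topologicalClosure = H

/-- The Frattini subgroup of a closed subgroup `H`: the topological closure of the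
abstract subgroup generated by all `p`-th powers and all commutators of elements of `H`. -/
def frattiniTop (p : ℕ) {G : Type*} [Group G] [TopologicalSpace G] [IsTopologicalGroup G]
    (H : Subgroup G) : Subgroup G :=
  (Subgroup.closure
      ({x | ∃ h ∈ H, x = h ^ p} ∪ {x | ∃ h₁ ∈ H, ∃ h₂ ∈ H, x = ⁅h₁, h₂⁆})).topologicalClosure

/-- Frattini-resistance. -/
def FrattiniResistant (p : ℕ) (G : Type*) [Group G] [TopologicalSpace G]
    [IsTopologicalGroup G] : Prop :=
  ∀ H₁ H₂ : Subgroup G, IsTopFG H₁ → IsTopFG H₂ →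
    (frattiniTop p H₁ ≤ frattiniTop p H₂ ↔ H₁ ≤ H₂)

/-- Frattini-injectivity. -/
def FrattiniInjective (p : ℕ) (G : Type*) [Group G] [TopologicalSpace G]
    [IsTopologicalGroup G] : Prop :=
  ∀ H₁ H₂ : Subgroup G, IsTopFG H₁ → IsTopFG H₂ →
    frattiniTop p H₁ = frattiniTop p H₂ → H₁ = H₂

end FrattiniPrelude


/-!
Write `mk a b c` for the unitriangular matrix with entries `a, b, c` at positions `(1,2)`,
`(2,3)`, `(1,3)`. The matrices whose `(2,3)`- and `(1,3)`-entries lie in `pℤ_p` form a closed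
subgroup containing `x` and `y ^ p`, hence `H = ⟨x, y ^ p⟩`; so `z ∉ H`, while
`z ^ p = ⁅x, y ^ p⁆ ∈ Φ(H)`. As `ℕ` is dense in `ℤ_p`, the closed subgroup `Φ(H)` contains,
along with `x ^ p`, `(y ^ p) ^ p` and `z ^ p`, every `mk (p a) (p² b) (p c)`. Every `p`-th power
and commutator of `H' = ⟨x, y ^ p, z⟩` has this form, because the `(2,3)`-entries of `H'` lie in
`pℤ_p`. Hence `Φ(H') = Φ(H)` although `z ∈ H' \ H`, and `Φ(⟨z⟩) ≤ Φ(H') = Φ(H)` although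
`⟨z⟩ ⊄ H`.
-/

open scoped commutatorElement

section Frattini

variable {G : Type*} [Group G] [TopologicalSpace G] [IsTopologicalGroup G] {n : ℕ}

lemma isClosed_frattiniTop (H : Subgroup G) : IsClosed (frattiniTop n H : Set G) :=
  Subgroup.isClosed_topologicalClosure _

lemma pow_mem_frattiniTop {H : Subgroup G} {g : G} (hg : g ∈ H) : g ^ n ∈ frattiniTop n H :=
  Subgroup.le_topologicalClosure _ (Subgroup.subset_closure (Or.inl ⟨g, hg, rfl⟩))

lemma commutatorElement_mem_frattiniTop {H : Subgroup G} {g₁ g₂ : G} (h₁ : g₁ ∈ H)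
    (h₂ : g₂ ∈ H) : ⁅g₁, g₂⁆ ∈ frattiniTop n H :=
  Subgroup.le_topologicalClosure _ (Subgroup.subset_closure (Or.inr ⟨g₁, h₁, g₂, h₂, rfl⟩))

lemma frattiniTop_le {H K : Subgroup G} (hK : IsClosed (K : Set G))
    (hpow : ∀ g ∈ H, g ^ n ∈ K) (hcomm : ∀ g₁ ∈ H, ∀ g₂ ∈ H, ⁅g₁, g₂⁆ ∈ K) :
    frattiniTop n H ≤ K := by
  refine Subgroup.topologicalClosure_minimal _ ((Subgroup.closure_le _).2 ?_) hK
  rintro _ (⟨g, hg, rfl⟩ | ⟨g₁, hg₁, g₂, hg₂, rfl⟩)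
  exacts [hpow g hg, hcomm g₁ hg₁ g₂ hg₂]

lemma frattiniTop_mono {H K : Subgroup G} (h : H ≤ K) : frattiniTop n H ≤ frattiniTop n K :=
  frattiniTop_le (isClosed_frattiniTop K) (fun _ hg ↦ pow_mem_frattiniTop (h hg))
    fun _ hg₁ _ hg₂ ↦ commutatorElement_mem_frattiniTop (h hg₁) (h hg₂)

lemma isTopFG_topologicalClosure_closure {S : Set G} (hS : S.Finite) :
    IsTopFG (Subgroup.closure S).topologicalClosure :=
  ⟨S, hS, rfl⟩

end Frattini

open IsLocalRing

lemma PadicInt.natCast_mem_maximalIdeal : (p : ℤ_[p]) ∈ maximalIdeal ℤ_[p] :=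
  (mem_maximalIdeal _).2 PadicInt.p_nonunit

lemma PadicInt.isClosed_maximalIdeal : IsClosed (maximalIdeal ℤ_[p] : Set ℤ_[p]) := by
  have : (maximalIdeal ℤ_[p] : Set ℤ_[p]) = Metric.ball 0 1 := by
    ext x
    rw [SetLike.mem_coe, mem_maximalIdeal, PadicInt.mem_nonunits, mem_ball_zero_iff]
  rw [this]
  exact IsUltrametricDist.isClosed_ball 0 1

namespace heisenberg

section

variable {p}

abbrev entry (g : heisenberg p) (i j : Fin 3) : ℤ_[p] := ((g : (Mat3 p)ˣ) : Mat3 p) i j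

noncomputable def mk (a b c : ℤ_[p]) : heisenberg p :=
  ⟨⟨!![1, a, c; 0, 1, b; 0, 0, 1], !![1, -a, a * b - c; 0, 1, -b; 0, 0, 1],
    by simp [Matrix.one_fin_three], by simp [Matrix.one_fin_three]; ring⟩,
   ⟨rfl, rfl, rfl, rfl, rfl, rfl⟩⟩

@[simp] lemma entry_mk_zero_one (a b c : ℤ_[p]) : entry (mk a b c) 0 1 = a := rfl
@[simp] lemma entry_mk_one_two (a b c : ℤ_[p]) : entry (mk a b c) 1 2 = b := rfl
@[simp] lemma entry_mk_zero_two (a b c : ℤ_[p]) : entry (mk a b c) 0 2 = c := rfl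

lemma eq_mk (g : heisenberg p) : g = mk (entry g 0 1) (entry g 1 2) (entry g 0 2) := by
  obtain ⟨u, h00, h11, h22, h10, h20, h21⟩ := g
  apply Subtype.ext; apply Units.ext
  ext i j
  fin_cases i <;> fin_cases j <;> simp [mk, *]

lemma mk_mul (a b c a' b' c' : ℤ_[p]) :
    mk a b c * mk a' b' c' = mk (a + a') (b + b') (c + c' + a * b') := by
  apply Subtype.ext; apply Units.ext
  ext i j
  fin_cases i <;> fin_cases j <;> simp [mk] <;> ring

lemma mk_zero : mk (0 : ℤ_[p]) 0 0 = 1 := by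
  apply Subtype.ext; apply Units.ext
  simp [mk, Matrix.one_fin_three]

lemma mk_inv (a b c : ℤ_[p]) : (mk a b c)⁻¹ = mk (-a) (-b) (a * b - c) := by
  refine inv_eq_of_mul_eq_one_right ?_
  rw [mk_mul, ← mk_zero]
  congr 1 <;> ring

lemma commutatorElement_mk (a b c a' b' c' : ℤ_[p]) :
    ⁅mk a b c, mk a' b' c'⁆ = mk 0 0 (a * b' - a' * b) := by
  rw [commutatorElement_def, mk_inv, mk_inv, mk_mul, mk_mul, mk_mul]
  congr 1 <;> ring

lemma mk_pow (a b c : ℤ_[p]) (n : ℕ) :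
    mk a b c ^ n = mk ((n : ℤ_[p]) * a) (n * b) (n * c + (n.choose 2 : ℤ_[p]) * (a * b)) := by
  induction n with
  | zero => simp [← mk_zero]
  | succ n ih =>
    rw [pow_succ, ih, mk_mul, Nat.choose_succ_succ', Nat.choose_one_right]
    push_cast
    congr 1 <;> ring

lemma entry_mul (g h : heisenberg p) :
    entry (g * h) 1 2 = entry g 1 2 + entry h 1 2 ∧
      entry (g * h) 0 2 = entry g 0 2 + entry h 0 2 + entry g 0 1 * entry h 1 2 := by
  rw [eq_mk g, eq_mk h, mk_mul]
  simp

lemma entry_inv (g : heisenberg p) :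
    entry g⁻¹ 1 2 = -entry g 1 2 ∧ entry g⁻¹ 0 2 = entry g 0 1 * entry g 1 2 - entry g 0 2 := by
  rw [eq_mk g, mk_inv]
  simp

lemma continuous_entry (i j : Fin 3) : Continuous fun g : heisenberg p ↦ entry g i j :=
  (Units.continuous_val.comp continuous_subtype_val).matrix_elem i j

lemma continuous_mk {X : Type*} [TopologicalSpace X] {a b c : X → ℤ_[p]} (ha : Continuous a)
    (hb : Continuous b) (hc : Continuous c) : Continuous fun x ↦ mk (a x) (b x) (c x) := by
  refine (Units.continuous_iff.2 ⟨continuous_matrix ?_, continuous_matrix ?_⟩).subtype_mk _ <;>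
    intro i j <;> fin_cases i <;> fin_cases j <;> simp <;> fun_prop

lemma mk_smul_mem {K : Subgroup (heisenberg p)} (hK : IsClosed (K : Set (heisenberg p)))
    {a b c : ℤ_[p]} (hab : a * b = 0) (hg : mk a b c ∈ K) (t : ℤ_[p]) :
    mk (t * a) (t * b) (t * c) ∈ K := by
  refine PadicInt.denseRange_natCast.induction_on t
    (hK.preimage (continuous_mk (by fun_prop) (by fun_prop) (by fun_prop))) fun n ↦ ?_
  simpa [mk_pow, hab] using pow_mem hg n

def idealSubgroup (I J : Ideal ℤ_[p]) (hIJ : I ≤ J) : Subgroup (heisenberg p) where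
  carrier := {g | entry g 1 2 ∈ I ∧ entry g 0 2 ∈ J}
  one_mem' := by
    rw [← mk_zero]
    exact ⟨I.zero_mem, J.zero_mem⟩
  mul_mem' := by
    rintro g h ⟨hg₁, hg₂⟩ ⟨hh₁, hh₂⟩
    show _ ∈ I ∧ _ ∈ J
    rw [(entry_mul g h).1, (entry_mul g h).2]
    exact ⟨I.add_mem hg₁ hh₁, J.add_mem (J.add_mem hg₂ hh₂) (J.mul_mem_left _ (hIJ hh₁))⟩
  inv_mem' := by
    rintro g ⟨hg₁, hg₂⟩
    show _ ∈ I ∧ _ ∈ J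
    rw [(entry_inv g).1, (entry_inv g).2]
    exact ⟨I.neg_mem hg₁, J.sub_mem (J.mul_mem_left _ (hIJ hg₁)) hg₂⟩

lemma isClosed_idealSubgroup {I J : Ideal ℤ_[p]} (hIJ : I ≤ J) (hI : IsClosed (I : Set ℤ_[p]))
    (hJ : IsClosed (J : Set ℤ_[p])) : IsClosed (idealSubgroup I J hIJ : Set (heisenberg p)) :=
  (hI.preimage (continuous_entry 1 2)).inter (hJ.preimage (continuous_entry 0 2))

end

lemma xH_eq : xH p = mk 1 0 0 := by
  apply Subtype.ext; apply Units.ext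
  ext i j
  fin_cases i <;> fin_cases j <;> simp [xH, transvection3, mk, Matrix.single]

lemma yH_eq : yH p = mk 0 1 0 := by
  apply Subtype.ext; apply Units.ext
  ext i j
  fin_cases i <;> fin_cases j <;> simp [yH, transvection3, mk, Matrix.single]

lemma zH_eq : zH p = mk 0 0 1 := by
  apply Subtype.ext; apply Units.ext
  ext i j
  fin_cases i <;> fin_cases j <;> simp [zH, transvection3, mk, Matrix.single]

noncomputable def Hxy : Subgroup (heisenberg p) :=
  (Subgroup.closure {xH p, yH p ^ p}).topologicalClosure

noncomputable def Hxyz : Subgroup (heisenberg p) :=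
  (Subgroup.closure {xH p, yH p ^ p, zH p}).topologicalClosure

lemma xH_mem_Hxy : xH p ∈ Hxy p :=
  Subgroup.le_topologicalClosure _ (Subgroup.subset_closure (by simp))

lemma yH_pow_mem_Hxy : yH p ^ p ∈ Hxy p :=
  Subgroup.le_topologicalClosure _ (Subgroup.subset_closure (by simp))

lemma zH_mem_Hxyz : zH p ∈ Hxyz p :=
  Subgroup.le_topologicalClosure _ (Subgroup.subset_closure (by simp))

lemma Hxy_le_Hxyz : Hxy p ≤ Hxyz p :=
  Subgroup.topologicalClosure_mono (Subgroup.closure_mono (by simp [Set.insert_subset_iff]))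

lemma closure_zH_le_Hxyz : (Subgroup.closure {zH p}).topologicalClosure ≤ Hxyz p :=
  Subgroup.topologicalClosure_mono (Subgroup.closure_mono (by simp))

lemma Hxy_le_idealSubgroup :
    Hxy p ≤ idealSubgroup (maximalIdeal ℤ_[p]) (maximalIdeal ℤ_[p]) le_rfl := by
  refine Subgroup.topologicalClosure_minimal _ ((Subgroup.closure_le _).2 ?_)
    (isClosed_idealSubgroup _ (PadicInt.isClosed_maximalIdeal p)
      (PadicInt.isClosed_maximalIdeal p))
  rintro _ (rfl | rfl)
  · simp [xH_eq, idealSubgroup]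
  · simpa [yH_eq, mk_pow, idealSubgroup] using PadicInt.natCast_mem_maximalIdeal p

lemma zH_notMem_Hxy : zH p ∉ Hxy p := fun h ↦ by
  simpa [zH_eq, idealSubgroup] using (Hxy_le_idealSubgroup p h).2

lemma Hxyz_le_idealSubgroup : Hxyz p ≤ idealSubgroup (maximalIdeal ℤ_[p]) ⊤ le_top := by
  refine Subgroup.topologicalClosure_minimal _ ((Subgroup.closure_le _).2 ?_)
    (isClosed_idealSubgroup _ (PadicInt.isClosed_maximalIdeal p) isClosed_univ)
  rintro _ (rfl | rfl | rfl)
  · simp [xH_eq, idealSubgroup]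
  · simpa [yH_eq, mk_pow, idealSubgroup] using PadicInt.natCast_mem_maximalIdeal p
  · simp [zH_eq, idealSubgroup]

lemma exists_eq_mk_of_mem_Hxyz {g : heisenberg p} (hg : g ∈ Hxyz p) :
    ∃ a b c : ℤ_[p], g = mk a ((p : ℤ_[p]) * b) c := by
  obtain ⟨b, hb⟩ := Ideal.mem_span_singleton'.1
    (PadicInt.maximalIdeal_eq_span_p (p := p) ▸ (Hxyz_le_idealSubgroup p hg).1)
  exact ⟨entry g 0 1, b, entry g 0 2, by rw [mul_comm, hb, ← eq_mk]⟩

lemma zH_pow_eq_commutatorElement : zH p ^ p = ⁅xH p, yH p ^ p⁆ := by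
  simp [zH_eq, xH_eq, yH_eq, mk_pow, commutatorElement_mk]

lemma mk_mem_frattiniTop_Hxy (a b c : ℤ_[p]) :
    mk ((p : ℤ_[p]) * a) (p * (p * b)) (p * c) ∈ frattiniTop p (Hxy p) := by
  have hΦ := isClosed_frattiniTop (n := p) (Hxy p)
  have hx : mk (p : ℤ_[p]) 0 0 ∈ frattiniTop p (Hxy p) := by
    simpa [xH_eq, mk_pow] using pow_mem_frattiniTop (n := p) (xH_mem_Hxy p)
  have hy : mk 0 ((p : ℤ_[p]) * (p : ℤ_[p])) 0 ∈ frattiniTop p (Hxy p) := by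
    simpa [yH_eq, mk_pow, pow_mul] using pow_mem_frattiniTop (n := p) (yH_pow_mem_Hxy p)
  have hz : mk 0 0 (p : ℤ_[p]) ∈ frattiniTop p (Hxy p) := by
    simpa [zH_eq, mk_pow, ← zH_pow_eq_commutatorElement] using
      commutatorElement_mem_frattiniTop (n := p) (xH_mem_Hxy p) (yH_pow_mem_Hxy p)
  have := mul_mem (mul_mem (mk_smul_mem hΦ (by simp) hx a) (mk_smul_mem hΦ (by simp) hy b))
    (mk_smul_mem hΦ (by simp) hz (c - a * (p * (p * b))))
  rw [mk_mul, mk_mul] at this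
  convert this using 2 <;> ring

lemma frattiniTop_Hxyz_eq : frattiniTop p (Hxyz p) = frattiniTop p (Hxy p) := by
  refine le_antisymm (frattiniTop_le (isClosed_frattiniTop _) ?_ ?_)
    (frattiniTop_mono (Hxy_le_Hxyz p))
  · intro g hg
    obtain ⟨a, b, c, rfl⟩ := exists_eq_mk_of_mem_Hxyz p hg
    convert mk_mem_frattiniTop_Hxy p a b (c + (p.choose 2 : ℤ_[p]) * (a * b)) using 1
    rw [mk_pow]
    congr 1; ring
  · intro g₁ hg₁ g₂ hg₂
    obtain ⟨a, b, c, rfl⟩ := exists_eq_mk_of_mem_Hxyz p hg₁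
    obtain ⟨a', b', c', rfl⟩ := exists_eq_mk_of_mem_Hxyz p hg₂
    convert mk_mem_frattiniTop_Hxy p 0 0 (a * b' - a' * b) using 1
    rw [commutatorElement_mk]
    congr 1 <;> ring

end heisenberg

open heisenberg

/-- In the Heisenberg pro-`p` group `G ⊆ GL₃(ℤ_p)`, with `x = I + E₁₂`,
`y = I + E₂₃`, `z = I + E₁₃` and `H` the closure of the subgroup generated by `x` and
`y ^ p`, one has `z ^ p ∈ Φ(H)` and `z ∉ H`; consequently `Φ(⟨z⟩) ⊆ Φ(H)` although
`⟨z⟩ ⊄ H`, so `G` is neither Frattini-resistant nor Frattini-injective. -/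
theorem heisenberg_not_frattiniResistant :
    (zH p) ^ p ∈ frattiniTop p
        ((Subgroup.closure {xH p, (yH p) ^ p}).topologicalClosure) ∧
      zH p ∉ (Subgroup.closure {xH p, (yH p) ^ p}).topologicalClosure ∧
      frattiniTop p ((Subgroup.closure {zH p}).topologicalClosure) ≤
        frattiniTop p ((Subgroup.closure {xH p, (yH p) ^ p}).topologicalClosure) ∧
      ¬ (Subgroup.closure {zH p}).topologicalClosure ≤
        (Subgroup.closure {xH p, (yH p) ^ p}).topologicalClosure ∧
      ¬ FrattiniResistant p ↥(heisenberg p) ∧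
      ¬ FrattiniInjective p ↥(heisenberg p) := by
  have hzH : zH p ∉ Hxy p := zH_notMem_Hxy p
  have hz_le : ¬ (Subgroup.closure {zH p}).topologicalClosure ≤ Hxy p := fun h ↦
    hzH (h (Subgroup.le_topologicalClosure _ (Subgroup.subset_closure rfl)))
  have hΦz : frattiniTop p ((Subgroup.closure {zH p}).topologicalClosure) ≤
      frattiniTop p (Hxy p) := by
    rw [← frattiniTop_Hxyz_eq]
    exact frattiniTop_mono (closure_zH_le_Hxyz p)
  refine ⟨?_, hzH, hΦz, hz_le, fun hFR ↦ ?_, fun hFI ↦ ?_⟩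
  · rw [zH_pow_eq_commutatorElement]
    exact commutatorElement_mem_frattiniTop (xH_mem_Hxy p) (yH_pow_mem_Hxy p)
  · exact hz_le ((hFR _ _ (isTopFG_topologicalClosure_closure (Set.finite_singleton _))
      (isTopFG_topologicalClosure_closure (by simp))).1 hΦz)
  · exact hzH ((hFI _ _ (isTopFG_topologicalClosure_closure (by simp))
      (isTopFG_topologicalClosure_closure (by simp)) (frattiniTop_Hxyz_eq p)).le (zH_mem_Hxyz p))
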